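/- Let C be a Grothendieck category with a Gabriel–Popescu embedding (U, Λ, S, Q). If there exists a functor H : C → Mod Λ preserving all small colimits such that Q ∘ H is naturally isomorphic to the identity functor of C, then C satisfies Ab6: for every object M of C, every index set J, and every family (S_j)_{j∈J} where each S_j is a nonempty upward-directed set of subobjects of M, one has, in the complete lattice of subobjects of M, the equality ⨅_{j∈J} (sup S_j) = ⨆_{f ∈ ∏_{j∈J} S_j} ⨅_{j∈J} f(j), where the supremum on the right ranges over all choice functions f with f(j) ∈ S_j for all j. -/

import Mathlib

open CategoryTheory Limits Opposite

universe v u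

/-- The old (Mathlib, December 2024) right action of `End X` (for `X : Cᵒᵖ`) on `unop X ⟶ Y`. -/
instance oldMulActionEndOpRight {C : Type u} [Category.{v} C] {X : Cᵒᵖ} {Y : C} :
    MulAction (End X) (unop X ⟶ Y) where
  smul r f := r.unop ≫ f
  one_smul := Category.id_comp
  mul_smul _ _ _ := Category.assoc _ _ _

/-- The old (Mathlib, December 2024) `Module (End X) (unop X ⟶ Y)` instance. -/
instance oldModuleEndOpRight {C : Type u} [Category.{v} C] [Preadditive C] {X : Cᵒᵖ} {Y : C} :
    Module (End X) (unop X ⟶ Y) where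
  smul_add _ _ _ := Preadditive.comp_add _ _ _ _ _ _
  smul_zero _ := Limits.comp_zero
  add_smul _ _ _ := Preadditive.add_comp _ _ _ _ _ _
  zero_smul _ := Limits.zero_comp

/-- The old (Mathlib, December 2024) `preadditiveCoyonedaObj`. -/
def oldPreadditiveCoyonedaObj {C : Type u} [Category.{v} C] [Preadditive C] (X : Cᵒᵖ) :
    C ⥤ ModuleCat.{v} (End X) where
  obj Y := ModuleCat.of _ (unop X ⟶ Y)
  map f := ModuleCat.ofHom
    { toFun := fun g => g ≫ f
      map_add' := fun _ _ => Preadditive.add_comp _ _ _ _ _ _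
      map_smul' := fun _ _ => Category.assoc _ _ _ }

/-- A Gabriel–Popescu embedding for a Grothendieck category `C`: a generator `U`,
the functor `S = Hom_C(U, -)` to right modules over `Λ = End U` (realized as
`preadditiveCoyonedaObj (op U) : C ⥤ ModuleCat (End (op U))`, where the module structure
on `U ⟶ X` is given by precomposition, i.e. the right `End U`-module structure),
together with a left adjoint `Q` of `S` which is exact, such that `S` is fully faithful. -/
structure GabrielPopescuEmbedding (C : Type u) [Category.{v} C] [Abelian C] where
  U : C
  isSeparator : IsSeparator U
  Q : ModuleCat.{v} (End (op U)) ⥤ C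
  adj : Q ⊣ oldPreadditiveCoyonedaObj (op U)
  qExact : PreservesFiniteLimits Q
  sFull : (oldPreadditiveCoyonedaObj (op U)).Full
  sFaithful : (oldPreadditiveCoyonedaObj (op U)).Faithful

/-- Fixes the universe of the `CompleteLattice (Subobject B)` instance to `v`, as in the old
(Mathlib, December 2024) instance, which used `[WellPowered C]` and `HasWidePullbacks.{v}`. -/
noncomputable instance oldSubobjectCompleteLattice {C : Type u} [Category.{v} C] [Abelian C] [HasLimits C]
    [HasColimits C] [WellPowered.{v} C] {B : C} : CompleteLattice (Subobject B) :=
  Subobject.instCompleteLattice.{v, v, u}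


/-!
Let `H : C ⥤ Mod Λ` and `Q` be as in the statement. Sending a subobject `A ≤ M` to the image of
`H A → H M`, and a submodule `N ≤ H M` to the image of `Q N → Q (H M) ≅ M`, gives two maps of
subobject lattices which preserve arbitrary suprema (suprema are images of coproducts, and both
functors preserve coproducts and epimorphisms); since `Q ∘ H ≅ 𝟭`, the second is a left inverse of
the first. So `Subobject M` is a sup-preserving retract of the submodule lattice of `H M`, which
satisfies Ab6 because it is compactly generated, and Ab6 passes to such retracts.
-/

/-- Only the nontrivial inequality of Ab6; the reverse one is `iSup_iInf_le_iInf_sSup`. -/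
def IsAB6Lattice.{w, x} (α : Type x) [CompleteLattice α] : Prop :=
  ∀ (J : Type w) (T : J → Set α), (∀ j, (T j).Nonempty) → (∀ j, DirectedOn (· ≤ ·) (T j)) →
    ⨅ j, sSup (T j) ≤ ⨆ f : (∀ j, T j), ⨅ j, (f j : α)

theorem iSup_iInf_le_iInf_sSup {α J : Type*} [CompleteLattice α] (T : J → Set α) :
    ⨆ f : (∀ j, T j), ⨅ j, (f j : α) ≤ ⨅ j, sSup (T j) :=
  iSup_le fun f => le_iInf fun j => (iInf_le _ j).trans (le_sSup (f j).2)

theorem IsCompactlyGenerated.isAB6Lattice {α : Type*} [CompleteLattice α]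
    [IsCompactlyGenerated α] : IsAB6Lattice α := by
  intro J T hne hdir
  refine le_iff_compact_le_imp.2 fun c hc hle => ?_
  choose f hfT hcf using fun j =>
    (CompleteLattice.isCompactElement_iff_le_of_directed_sSup_le _ c).1
      hc (T j) (hne j) (hdir j) (hle.trans (iInf_le _ j))
  exact (le_iInf hcf).trans (le_iSup (fun g : ∀ j, T j => ⨅ j, (g j : α)) fun j => ⟨f j, hfT j⟩)

theorem IsAB6Lattice.of_retract.{w} {α β : Type*} [CompleteLattice α] [CompleteLattice β]
    (φ : sSupHom α β) (ψ : sSupHom β α) (hψφ : ∀ a, ψ (φ a) = a) (hβ : IsAB6Lattice.{w} β) :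
    IsAB6Lattice.{w} α := by
  intro J T hne hdir
  have hφ : Monotone φ := OrderHomClass.mono φ
  have hψ : Monotone ψ := OrderHomClass.mono ψ
  calc ⨅ j, sSup (T j) = ψ (φ (⨅ j, sSup (T j))) := (hψφ _).symm
    _ ≤ ψ (⨅ j, sSup (φ '' T j)) :=
      hψ (le_iInf fun j => (hφ (iInf_le _ j)).trans (map_sSup φ _).le)
    _ ≤ ψ (⨆ g : ∀ j, φ '' T j, ⨅ j, (g j : β)) :=
      hψ (hβ J _ (fun j => (hne j).image φ) fun j => RelHomClass.directedOn (hdir j))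
    _ = ⨆ g : ∀ j, φ '' T j, ψ (⨅ j, (g j : β)) := map_iSup ψ _
    _ ≤ ⨆ f : ∀ j, T j, ⨅ j, (f j : α) := iSup_le fun g => ?_
  choose f hfT hf using fun j => (g j).2
  calc ψ (⨅ j, (g j : β)) ≤ ⨅ j, ψ (g j) := le_iInf fun j => hψ (iInf_le _ j)
    _ = ⨅ j, f j := by simp only [← hf, hψφ]
    _ ≤ _ := le_iSup (fun f : ∀ j, T j => ⨅ j, (f j : α)) fun j => ⟨f j, hfT j⟩

theorem ModuleCat.isAB6Lattice_subobject {R : Type v} [Ring R] (N : ModuleCat.{v} R) :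
    IsAB6Lattice.{v} (Subobject N) :=
  IsAB6Lattice.of_retract (N.subobjectModule : sSupHom (Subobject N) (Submodule R N))
    (N.subobjectModule.symm : sSupHom (Submodule R N) (Subobject N))
    N.subobjectModule.symm_apply_apply IsCompactlyGenerated.isAB6Lattice

namespace CategoryTheory

section ImageSubobject

variable {C : Type u} [Category.{v} C] [Abelian C]

theorem imageSubobject_epi_comp {X' X Y : C} (h : X' ⟶ X) [Epi h] (f : X ⟶ Y) :
    imageSubobject (h ≫ f) = imageSubobject f := by
  refine le_antisymm (imageSubobject_comp_le h f) ?_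
  have sq : CommSq (factorThruImageSubobject (h ≫ f)) h (imageSubobject (h ≫ f)).arrow f :=
    ⟨by simp⟩
  have := strongEpi_of_epi h
  exact imageSubobject_le f sq.lift sq.fac_right

theorem Functor.imageSubobject_map_imageSubobject_arrow {D : Type*} [Category D] [Abelian D]
    (F : C ⥤ D) [F.PreservesEpimorphisms] {W X : C} {Y : D} (g : W ⟶ X) (e : F.obj X ⟶ Y) :
    imageSubobject (F.map (imageSubobject g).arrow ≫ e) = imageSubobject (F.map g ≫ e) := by
  rw [← imageSubobject_epi_comp (F.map (factorThruImageSubobject g)), ← Category.assoc,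
    ← F.map_comp, imageSubobject_arrow_comp]

variable [HasLimits C] [HasColimits C] [WellPowered.{v} C]

theorem imageSubobject_sigmaDesc {ι : Type v} {Z : ι → C} {X : C} (f : ∀ i, Z i ⟶ X) :
    imageSubobject (Limits.Sigma.desc f) = ⨆ i, imageSubobject (f i) := by
  refine le_antisymm (imageSubobject_le _ (Limits.Sigma.desc fun i =>
      factorThruImageSubobject (f i) ≫ Subobject.ofLE _ _ (le_iSup (imageSubobject <| f ·) i))
    (by ext i; simp)) (iSup_le fun i => ?_)
  simpa using imageSubobject_comp_le (Sigma.ι Z i) (Limits.Sigma.desc f)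

theorem sSup_eq_imageSubobject_sigmaDesc {X : C} (s : Set (Subobject X)) :
    sSup s = imageSubobject
      (Limits.Sigma.desc fun i : Shrink.{v} s => ((equivShrink.{v} s).symm i).1.arrow) := by
  rw [imageSubobject_sigmaDesc]
  simp only [imageSubobject_mono, Subobject.mk_arrow]
  rw [sSup_eq_iSup', (equivShrink.{v} s).symm.iSup_comp (g := fun a : s => (a : Subobject X))]

end ImageSubobject

section SubobjectImage

variable {C : Type u} [Category.{v} C] [HasColimits C]
  {D : Type*} [Category.{v} D] [Abelian D] [HasLimits D] [HasColimits D] [WellPowered.{v} D]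

theorem Functor.imageSubobject_map_sigmaDesc (F : C ⥤ D) [PreservesColimits F] {ι : Type v}
    {Z : ι → C} {X : C} {Y : D} (f : ∀ i, Z i ⟶ X) (e : F.obj X ⟶ Y) :
    imageSubobject (F.map (Limits.Sigma.desc f) ≫ e) = ⨆ i, imageSubobject (F.map (f i) ≫ e) := by
  rw [← imageSubobject_iso_comp (sigmaComparison F Z), ← imageSubobject_sigmaDesc]
  simp only [sigmaComparison_map_desc_assoc]
  congr 1
  ext i
  simp

noncomputable def Functor.subobjectImage [Abelian C] [HasLimits C] [WellPowered.{v} C]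
    (F : C ⥤ D) [PreservesColimits F] {X : C} {Y : D} (e : F.obj X ⟶ Y) :
    sSupHom (Subobject X) (Subobject Y) where
  toFun A := imageSubobject (F.map A.arrow ≫ e)
  map_sSup' s := by
    rw [sSup_eq_imageSubobject_sigmaDesc s, F.imageSubobject_map_imageSubobject_arrow,
      F.imageSubobject_map_sigmaDesc, sSup_image, iSup_subtype',
      ← (equivShrink.{v} s).symm.iSup_comp]

variable [Abelian C] [HasLimits C] [WellPowered.{v} C]
  {H : C ⥤ D} {Q : D ⥤ C} [PreservesColimits H] [PreservesColimits Q]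

theorem Functor.subobjectImage_subobjectImage_of_iso (hQH : H ⋙ Q ≅ 𝟭 C) {M : C}
    (A : Subobject M) : Q.subobjectImage (hQH.app M).hom (H.subobjectImage (𝟙 _) A) = A := by
  change imageSubobject (Q.map (imageSubobject (H.map A.arrow ≫ 𝟙 _)).arrow ≫ _) = A
  have hnat : Q.map (H.map A.arrow) ≫ (hQH.app M).hom = hQH.hom.app A ≫ A.arrow :=
    hQH.hom.naturality A.arrow
  rw [Q.imageSubobject_map_imageSubobject_arrow, Category.comp_id, hnat, imageSubobject_iso_comp,
    imageSubobject_mono, Subobject.mk_arrow]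

theorem isAB6Lattice_subobject_of_iso.{w} (hQH : H ⋙ Q ≅ 𝟭 C) (M : C)
    (hD : IsAB6Lattice.{w} (Subobject (H.obj M))) : IsAB6Lattice.{w} (Subobject M) :=
  IsAB6Lattice.of_retract (H.subobjectImage (𝟙 _)) (Q.subobjectImage (hQH.app M).hom)
    (Functor.subobjectImage_subobjectImage_of_iso hQH) hD

end SubobjectImage

end CategoryTheory

theorem stmt2_general {C : Type u} [Category.{v} C] [Abelian C] [HasLimits C] [HasColimits C]
    [WellPowered.{v} C]
    (E : GabrielPopescuEmbedding C)
    (H : C ⥤ ModuleCat.{v} (End (op E.U)))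
    (hH : PreservesColimits H)
    (hQH : H ⋙ E.Q ≅ 𝟭 C) :
    ∀ (M : C) (J : Type v) (S : J → Set (Subobject M)),
      (∀ j, (S j).Nonempty) → (∀ j, DirectedOn (· ≤ ·) (S j)) →
      ⨅ j, sSup (S j) = ⨆ f : (∀ j, S j), ⨅ j, (f j : Subobject M) := by
  intro M J S hne hdir
  have := E.adj.leftAdjoint_preservesColimits
  exact le_antisymm
    (isAB6Lattice_subobject_of_iso hQH M (ModuleCat.isAB6Lattice_subobject _) J S hne hdir)
    (iSup_iInf_le_iInf_sSup S)

/-- If a Grothendieck category `C` with a Gabriel–Popescu embedding `(U, Λ, S, Q)` admits a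
cocontinuous functor `H : C ⥤ Mod Λ` with `Q ∘ H ≅ 𝟭 C`, then `C` satisfies Ab6: for every
object `M`, every family of nonempty upward-directed sets `S j` of subobjects of `M` satisfies
`⨅ j, sSup (S j) = ⨆ (f : ∀ j, S j), ⨅ j, f j` in the subobject lattice of `M`. -/
theorem stmt2 {C : Type u} [Category.{v} C] [Abelian C] [HasLimits C] [HasColimits C] [AB5 C]
    [WellPowered.{v} C]
    (E : GabrielPopescuEmbedding C)
    (H : C ⥤ ModuleCat.{v} (End (op E.U)))
    (hH : PreservesColimits H)
    (hQH : H ⋙ E.Q ≅ 𝟭 C) :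
    ∀ (M : C) (J : Type v) (S : J → Set (Subobject M)),
      (∀ j, (S j).Nonempty) → (∀ j, DirectedOn (· ≤ ·) (S j)) →
      ⨅ j, sSup (S j) = ⨆ f : (∀ j, S j), ⨅ j, (f j : Subobject M) :=
  stmt2_general E H hH hQH
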